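/- Let q > 1 be a real number, 0 < δ < 1, and let p = (p_1, p_2, …) be a real sequence with |p_n| < δ^n/q^n for all n ≥ 1. Then the partial derivative ∂_1 c_1^{(q)}(p) exists and ∂_1 c_1^{(q)}(p) = (1 + q · c_1^{(q)}(p) − q p_1)/(1 + p_1). -/

import Mathlib

/-!
Away from the factor `n = 1`, the product `H_q(p)` does not depend on `p₁`, and that factor is
`(1 + p₁)^{M₁(q)} = (1 + p₁)^q`. Hence `∂₁ H_q(p) = q H_q(p)/(1 + p₁)`, and the formula for
`∂₁ c₁` is a rearrangement of the definition of `c₁`. To split off one factor, the product is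
written as the exponential of the absolutely convergent series `∑ M_n(q) log(1 + p_n)`: since
`|M_n(q)| ≤ q^n`, its terms are `O(δ^n)`.
-/

/-- `s_1(q) = q + 1` and `s_n(q) = ∑_{d ∣ n} μ(n/d) q^d` for `n ≠ 1`.
(For `n = 0` the sum over divisors is empty, so `sFun q 0 = 0`.) -/
noncomputable def sFun (q : ℝ) (n : ℕ) : ℝ :=
  if n = 1 then q + 1
  else ∑ d ∈ n.divisors, (ArithmeticFunction.moebius (n / d) : ℝ) * q ^ d

/-- `M_n(q) = (1/n) ∑_{d ∣ n} μ(n/d) q^d`; so `M_1(q) = q` and `M_n(q) = s_n(q)/n` for `n ≥ 2`. -/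
noncomputable def MFun (q : ℝ) (n : ℕ) : ℝ :=
  (1 / (n : ℝ)) * ∑ d ∈ n.divisors, (ArithmeticFunction.moebius (n / d) : ℝ) * q ^ d

/-- `H_q(p) = ∏_{n ≥ 1} (1 + p_n)^{M_n(q)}`, a product of real powers (`Real.rpow`).
The `n = 0` factor is `(1 + p 0) ^ (0 : ℝ) = 1`, so the product effectively runs over `n ≥ 1`. -/
noncomputable def Hfun (q : ℝ) (p : ℕ → ℝ) : ℝ :=
  ∏' n : ℕ, (1 + p n) ^ (MFun q n)

/-- `c_1^{(q)}(p) = q·p_1/(q − 1) − (H_q(p) − 1)/(q(q − 1))`. -/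
noncomputable def c1Fun (q : ℝ) (p : ℕ → ℝ) : ℝ :=
  q * p 1 / (q - 1) - (Hfun q p - 1) / (q * (q - 1))

open Real Function Filter Topology

lemma MFun_zero (q : ℝ) : MFun q 0 = 0 := by simp [MFun]

lemma MFun_one (q : ℝ) : MFun q 1 = q := by simp [MFun]

lemma abs_MFun_le {q : ℝ} (hq : 1 ≤ q) (n : ℕ) : |MFun q n| ≤ q ^ n := by
  rcases n.eq_zero_or_pos with rfl | hn
  · simp [MFun_zero]
  have hterm : ∀ d ∈ n.divisors,
      |(ArithmeticFunction.moebius (n / d) : ℝ) * q ^ d| ≤ q ^ n := by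
    intro d hd
    have hμ : |(ArithmeticFunction.moebius (n / d) : ℝ)| ≤ 1 := by
      exact_mod_cast ArithmeticFunction.abs_moebius_le_one
    have hqd : 0 ≤ q ^ d := pow_nonneg (zero_le_one.trans hq) d
    rw [abs_mul, abs_of_nonneg hqd]
    exact (mul_le_of_le_one_left hqd hμ).trans (pow_le_pow_right₀ hq (Nat.divisor_le hd))
  have hcard : (n.divisors.card : ℝ) ≤ n := by exact_mod_cast Nat.card_divisors_le_self n
  calc |MFun q n|
      = (1 / (n : ℝ)) * |∑ d ∈ n.divisors, (ArithmeticFunction.moebius (n / d) : ℝ) * q ^ d| := by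
        rw [MFun, abs_mul, abs_of_nonneg (by positivity)]
    _ ≤ (1 / (n : ℝ)) * (n.divisors.card * q ^ n) := by
        gcongr
        simpa using (Finset.abs_sum_le_sum_abs _ _).trans (Finset.sum_le_sum hterm)
    _ ≤ (1 / (n : ℝ)) * (n * q ^ n) := by gcongr
    _ = q ^ n := by field_simp

lemma abs_log_one_add_le {x : ℝ} (hx : |x| < 1) : |log (1 + x)| ≤ |x| / (1 - |x|) := by
  simpa [sub_eq_add_neg] using abs_log_sub_add_sum_range_le (x := -x) (by rwa [abs_neg]) 0

lemma abs_MFun_mul_log_one_add_le {q δ x : ℝ} {n : ℕ} (hq : 1 ≤ q) (hδ0 : 0 ≤ δ) (hδ1 : δ < 1)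
    (hn : 1 ≤ n) (hx : |x| < δ ^ n / q ^ n) :
    |MFun q n * log (1 + x)| ≤ δ ^ n / (1 - δ) := by
  have hqn : 0 < q ^ n := by positivity
  have hqx : q ^ n * |x| ≤ δ ^ n := by
    rw [lt_div_iff₀ hqn] at hx
    linarith
  have hxδ : |x| ≤ δ :=
    calc |x| ≤ δ ^ n := hx.le.trans (div_le_self (by positivity) (one_le_pow₀ hq))
      _ ≤ δ := pow_le_of_le_one hδ0 hδ1.le (by omega)
  calc |MFun q n * log (1 + x)|
      = |MFun q n| * |log (1 + x)| := abs_mul _ _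
    _ ≤ q ^ n * (|x| / (1 - δ)) := by
        gcongr
        · exact abs_MFun_le hq n
        · exact (abs_log_one_add_le (by linarith)).trans (by gcongr)
    _ ≤ δ ^ n / (1 - δ) := by
        rw [← mul_div_assoc]
        gcongr

lemma summable_MFun_mul_log_one_add {q δ : ℝ} {p : ℕ → ℝ} (hq : 1 ≤ q) (hδ0 : 0 ≤ δ)
    (hδ1 : δ < 1) (hp : ∀ n : ℕ, 1 ≤ n → |p n| < δ ^ n / q ^ n) :
    Summable fun n => MFun q n * log (1 + p n) := by
  refine ((summable_geometric_of_lt_one hδ0 hδ1).div_const (1 - δ)).of_norm_bounded fun n => ?_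
  rcases n.eq_zero_or_pos with rfl | hn
  · simp only [MFun_zero, zero_mul, norm_zero]
    exact div_nonneg (pow_nonneg hδ0 0) (by linarith)
  · exact abs_MFun_mul_log_one_add_le hq hδ0 hδ1 hn (hp n hn)

section Hfun

variable {q : ℝ} {p : ℕ → ℝ}

lemma Hfun_eq_exp_tsum (hpos : ∀ n : ℕ, 1 ≤ n → 0 < 1 + p n)
    (hs : Summable fun n => MFun q n * log (1 + p n)) :
    Hfun q p = exp (∑' n, MFun q n * log (1 + p n)) := by
  have hfactor : ∀ n, (1 + p n) ^ MFun q n = exp (MFun q n * log (1 + p n)) := by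
    intro n
    rcases n.eq_zero_or_pos with rfl | hn
    · simp [MFun_zero]
    · rw [rpow_def_of_pos (hpos n hn), mul_comm]
  simp only [Hfun, hfactor]
  exact hs.hasSum.rexp.tprod_eq

lemma Hfun_update (hpos : ∀ n : ℕ, 1 ≤ n → 0 < 1 + p n)
    (hs : Summable fun n => MFun q n * log (1 + p n)) (m : ℕ) {t : ℝ} (ht : 0 < 1 + t) :
    Hfun q (update p m t) =
      (1 + t) ^ MFun q m * exp (∑' n, if n = m then 0 else MFun q n * log (1 + p n)) := by
  have hpos' : ∀ n : ℕ, 1 ≤ n → 0 < 1 + update p m t n := by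
    intro n hn
    rcases eq_or_ne n m with rfl | hnm
    · rwa [update_self]
    · rw [update_of_ne hnm]
      exact hpos n hn
  have hterms : (fun n => MFun q n * log (1 + update p m t n)) =
      update (fun n => MFun q n * log (1 + p n)) m (MFun q m * log (1 + t)) := by
    funext n
    rcases eq_or_ne n m with rfl | hnm
    · simp only [update_self]
    · simp only [update_of_ne hnm]
  have hs' := hs.update m (MFun q m * log (1 + t))
  rw [Hfun_eq_exp_tsum hpos' (hterms ▸ hs'), hterms, hs'.tsum_eq_add_tsum_ite m, update_self,
    exp_add, rpow_def_of_pos ht, mul_comm (log _)]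
  congr 2
  refine tsum_congr fun n => ?_
  split_ifs with hnm
  · rfl
  · rw [update_of_ne hnm]

lemma hasDerivAt_Hfun_update (hpos : ∀ n : ℕ, 1 ≤ n → 0 < 1 + p n)
    (hs : Summable fun n => MFun q n * log (1 + p n)) {m : ℕ} (hm : 1 ≤ m) :
    HasDerivAt (fun t => Hfun q (update p m t)) (MFun q m * Hfun q p / (1 + p m)) (p m) := by
  set E := exp (∑' n, if n = m then 0 else MFun q n * log (1 + p n))
  have hpm : 0 < 1 + p m := hpos m hm
  have hlocal : (fun t => Hfun q (update p m t)) =ᶠ[𝓝 (p m)] fun t => (1 + t) ^ MFun q m * E := by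
    filter_upwards [eventually_gt_nhds (show -1 < p m by linarith)] with t ht
    exact Hfun_update hpos hs m (by linarith)
  have hHp : Hfun q p = (1 + p m) ^ MFun q m * E := by
    simpa using Hfun_update hpos hs m hpm
  refine ((((hasDerivAt_id (p m)).const_add 1).rpow_const
    (Or.inl hpm.ne')).mul_const E).congr_of_eventuallyEq hlocal |>.congr_deriv ?_
  rw [hHp, id, rpow_sub_one hpm.ne']
  ring

end Hfun

/-- For `q > 1`, `0 < δ < 1` and `|p_n| < δ^n/q^n` for all `n ≥ 1`, the partial derivative
`∂_1 c_1^{(q)}(p)` (the derivative at `t = p_1` of `t ↦ c_1^{(q)}` of `p` with first entry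
replaced by `t`) exists and equals `(1 + q·c_1^{(q)}(p) − q·p_1)/(1 + p_1)`. -/
theorem deriv_c1_first_variable (q δ : ℝ) (hq : 1 < q) (hδ0 : 0 < δ) (hδ1 : δ < 1)
    (p : ℕ → ℝ) (hp : ∀ n : ℕ, 1 ≤ n → |p n| < δ ^ n / q ^ n) :
    ∃ D : ℝ,
      HasDerivAt (fun t : ℝ => c1Fun q (Function.update p 1 t)) D (p 1) ∧
      D = (1 + q * c1Fun q p - q * p 1) / (1 + p 1) := by
  have hpos : ∀ n : ℕ, 1 ≤ n → 0 < 1 + p n := by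
    intro n hn
    have hbound : δ ^ n / q ^ n ≤ 1 :=
      div_le_one_of_le₀ (pow_le_pow_left₀ hδ0.le (hδ1.trans hq).le n) (by positivity)
    linarith [neg_abs_le (p n), hp n hn]
  have hs := summable_MFun_mul_log_one_add hq.le hδ0.le hδ1 hp
  have hH := hasDerivAt_Hfun_update hpos hs le_rfl
  rw [MFun_one] at hH
  have hc1 : HasDerivAt (fun t => c1Fun q (update p 1 t))
      (q / (q - 1) - q * Hfun q p / (1 + p 1) / (q * (q - 1))) (p 1) := by
    have hlin : HasDerivAt (fun t => q * t / (q - 1)) (q / (q - 1)) (p 1) := by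
      simpa using ((hasDerivAt_id (p 1)).const_mul q).div_const (q - 1)
    simp only [c1Fun, update_self]
    exact hlin.sub ((hH.sub_const 1).div_const (q * (q - 1)))
  refine ⟨_, hc1, ?_⟩
  have hq0 : q ≠ 0 := (zero_lt_one.trans hq).ne'
  have hq1 : q - 1 ≠ 0 := sub_ne_zero.mpr hq.ne'
  have hp1 : 1 + p 1 ≠ 0 := (hpos 1 le_rfl).ne'
  rw [c1Fun]
  field_simp
  ring
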